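/- Let I ⊆ k[x_1,…,x_n] be an ideal and ≺ a term order. If v ∈ C_≺(I) then in_≺(in_v(I)) = in_≺(I). -/

import Mathlib

open MvPolynomial

/-- A term order on the monomials of `k[x_1,…,x_n]`, identified with exponent
vectors in `ℕ^n`: a strict total order with `1` smallest and compatible with
multiplication of monomials. -/
structure TermOrder (n : ℕ) : Type where
  lt : (Fin n →₀ ℕ) → (Fin n →₀ ℕ) → Prop
  irrefl : ∀ a, ¬ lt a a
  trans : ∀ a b c, lt a b → lt b c → lt a c
  total : ∀ a b, a ≠ b → lt a b ∨ lt b a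
  zero_lt : ∀ a, a ≠ 0 → lt 0 a
  add_right : ∀ a b c, lt a b → lt (a + c) (b + c)

variable {n : ℕ} {k : Type*} [Field k]

/-- The exponent of the `τ`-largest term of `f` (and `0` if `f = 0`). -/
noncomputable def TermOrder.leadExp (τ : TermOrder n) (f : MvPolynomial (Fin n) k) :
    Fin n →₀ ℕ :=
  letI := Classical.propDecidable (∃ α, α ∈ f.support ∧ ∀ β ∈ f.support, β ≠ α → τ.lt β α)
  if h : ∃ α, α ∈ f.support ∧ ∀ β ∈ f.support, β ≠ α → τ.lt β α then h.choose else 0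

/-- The initial term `in_τ(f)` : the `τ`-largest term of `f` (with coefficient). -/
noncomputable def TermOrder.initialTerm (τ : TermOrder n) (f : MvPolynomial (Fin n) k) :
    MvPolynomial (Fin n) k :=
  monomial (τ.leadExp f) (f.coeff (τ.leadExp f))

/-- The initial ideal `in_τ(I) = ⟨in_τ(f) : f ∈ I \ {0}⟩`. -/
noncomputable def TermOrder.initialIdeal (τ : TermOrder n) (I : Ideal (MvPolynomial (Fin n) k)) :
    Ideal (MvPolynomial (Fin n) k) :=
  Ideal.span {p | ∃ f ∈ I, f ≠ 0 ∧ p = τ.initialTerm f}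

/-- The `ω`-degree `⟨ω,α⟩` of a monomial exponent `α`. -/
noncomputable def wdeg (ω : Fin n → ℝ) (α : Fin n →₀ ℕ) : ℝ := ∑ i, ω i * (α i : ℝ)

/-- The initial form `in_ω(f)`: the sum of the terms of `f` whose exponents
maximize `⟨ω,·⟩`. -/
noncomputable def initialForm (ω : Fin n → ℝ) (f : MvPolynomial (Fin n) k) :
    MvPolynomial (Fin n) k :=
  letI : DecidablePred fun α : Fin n →₀ ℕ => ∀ β ∈ f.support, wdeg ω β ≤ wdeg ω α :=
    Classical.decPred _
  ∑ α ∈ f.support.filter (fun α => ∀ β ∈ f.support, wdeg ω β ≤ wdeg ω α),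
    monomial α (f.coeff α)

/-- The initial ideal `in_ω(I) = ⟨in_ω(f) : f ∈ I⟩`. -/
noncomputable def initialFormIdeal (ω : Fin n → ℝ) (I : Ideal (MvPolynomial (Fin n) k)) :
    Ideal (MvPolynomial (Fin n) k) :=
  Ideal.span {p | ∃ f ∈ I, p = initialForm ω f}

/-- `C_≺(I)`: the closure of `{u : in_u(I) = in_≺(I)}` in `ℝ^n`. -/
noncomputable def Cprec (τ : TermOrder n) (I : Ideal (MvPolynomial (Fin n) k)) :
    Set (Fin n → ℝ) :=
  closure {u : Fin n → ℝ | initialFormIdeal u I = τ.initialIdeal I}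

/-- `C_v(I)`: the closure of the equivalence class `{u : in_u(I) = in_v(I)}`. -/
noncomputable def Cv (I : Ideal (MvPolynomial (Fin n) k)) (v : Fin n → ℝ) :
    Set (Fin n → ℝ) :=
  closure {u : Fin n → ℝ | initialFormIdeal u I = initialFormIdeal v I}

/-- `F` is a face of `C`: either empty or the set of maximizers over `C` of a
linear functional. -/
def IsFaceOf (C F : Set (Fin n → ℝ)) : Prop :=
  F = ∅ ∨ ∃ w : Fin n → ℝ, F = {x ∈ C | ∀ y ∈ C, ∑ i, w i * y i ≤ ∑ i, w i * x i}

/-- The Gröbner fan of `I`: all nonempty faces of the cones `C_v(I)`, `v ∈ ℝ^n_{>0}`. -/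
noncomputable def GroebnerFan (I : Ideal (MvPolynomial (Fin n) k)) :
    Set (Set (Fin n → ℝ)) :=
  {F | F.Nonempty ∧ ∃ v : Fin n → ℝ, (∀ i, 0 < v i) ∧ IsFaceOf (Cv I v) F}

/-- `G` is a (finite) Gröbner basis of `I` w.r.t. `τ`. -/
def IsGroebnerBasis (τ : TermOrder n) (I : Ideal (MvPolynomial (Fin n) k))
    (G : Set (MvPolynomial (Fin n) k)) : Prop :=
  G.Finite ∧ Ideal.span G = I ∧ τ.initialIdeal I = Ideal.span (τ.initialTerm '' G)

/-- `G` is the reduced Gröbner basis of `I` w.r.t. `τ`. -/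
def IsReducedGroebnerBasis (τ : TermOrder n) (I : Ideal (MvPolynomial (Fin n) k))
    (G : Set (MvPolynomial (Fin n) k)) : Prop :=
  IsGroebnerBasis τ I G ∧
  (∀ g ∈ G, g.coeff (τ.leadExp g) = 1) ∧
  (∀ g ∈ G, ∀ α ∈ g.support, α ≠ τ.leadExp g →
    (monomial α 1 : MvPolynomial (Fin n) k) ∉ τ.initialIdeal I) ∧
  (∀ g ∈ G, Ideal.span (τ.initialTerm '' (G \ {g})) ≠ τ.initialIdeal I)

/-!
Let `L` be the set of leading exponents of `I`. Division by elements of `I` with prescribed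
leading exponents gives, for every `σ ∈ L`, some `g σ ∈ I` with coefficient `1` at `σ` and all
its other exponents outside `L`; these `g σ` span `I` over `k`. If `in_u(I) = in_≺(I)`, then
`in_u(g σ)` lies in the monomial ideal `in_≺(I)`, which forces `σ` to be `u`-maximal in `g σ`;
being a closed condition on `u`, this persists at `v`. So the `in_v(g σ)` form a family of the same
kind, and taking top `v`-components shows that they span `in_v(I)` over `k`. A nonzero
`k`-combination of such a family has its leading exponent in `L`, and `σ` is the leading
exponent of `in_v(g σ)`: hence `in_v(I)` and `I` have the same leading exponents.
-/

theorem MvPolynomial.mem_support_monomial_one_mul {σ R : Type*} [CommSemiring R]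
    {δ β : σ →₀ ℕ} {f : MvPolynomial σ R} :
    β ∈ (monomial δ 1 * f).support ↔ ∃ α ∈ f.support, δ + α = β := by
  constructor
  · intro h
    rw [mem_support_iff, coeff_monomial_mul'] at h
    split_ifs at h with hle
    · exact ⟨β - δ, mem_support_iff.2 (by simpa using h), add_tsub_cancel_of_le hle⟩
    · exact absurd rfl h
  · rintro ⟨α, hα, rfl⟩
    rwa [mem_support_iff, coeff_monomial_mul, one_mul, ← mem_support_iff]

theorem MvPolynomial.mem_span_of_mem_ideal_span {σ R : Type*} [CommSemiring R]
    {s : Set (MvPolynomial σ R)} (hs : ∀ δ, ∀ x ∈ s, monomial δ 1 * x ∈ Submodule.span R s)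
    {p : MvPolynomial σ R} (hp : p ∈ Ideal.span s) : p ∈ Submodule.span R s := by
  have hmonomial (δ : σ →₀ ℕ) : ∀ x ∈ Submodule.span R s, monomial δ 1 * x ∈ Submodule.span R s :=
    Submodule.span_le (p := (Submodule.span R s).comap (LinearMap.mulLeft R (monomial δ 1))).2
      (hs δ)
  have hmul (r : MvPolynomial σ R) {x} (hx : x ∈ Submodule.span R s) :
      r * x ∈ Submodule.span R s := by
    induction r using MvPolynomial.induction_on' with
    | monomial δ a =>
      rw [show monomial δ a * x = a • (monomial δ 1 * x) by
        rw [← smul_mul_assoc, smul_monomial, smul_eq_mul, mul_one]]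
      exact Submodule.smul_mem _ a (hmonomial δ x hx)
    | add p q hp hq => rw [add_mul]; exact add_mem hp hq
  induction hp using Submodule.span_induction with
  | mem x hx => exact Submodule.subset_span hx
  | zero => exact zero_mem _
  | add x y _ _ hx hy => exact add_mem hx hy
  | smul r x _ hx => exact hmul r hx

namespace TermOrder

variable (τ : TermOrder n)

theorem lt_asymm {a b : Fin n →₀ ℕ} (h : τ.lt a b) : ¬ τ.lt b a :=
  fun h' => τ.irrefl a (τ.trans _ _ _ h h')

instance : IsStrictOrder (Fin n →₀ ℕ) τ.lt where
  irrefl := τ.irrefl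
  trans := τ.trans

theorem exists_max {s : Finset (Fin n →₀ ℕ)} (hs : s.Nonempty) :
    ∃ α ∈ s, ∀ β ∈ s, β ≠ α → τ.lt β α := by
  obtain ⟨⟨α, hα⟩, -, hmax⟩ :=
    (s.wellFoundedOn (r := Function.swap τ.lt)).has_min Set.univ ⟨⟨_, hs.choose_spec⟩, trivial⟩
  exact ⟨α, hα, fun β hβ hne => (τ.total β α hne).resolve_right (hmax ⟨β, hβ⟩ trivial)⟩

/-- By Dickson's lemma a descending chain has `a i ≤ a j` for some `i < j`, and then
`a i ≼ a j` because `1` is the smallest monomial. -/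
theorem wellFounded : WellFounded τ.lt := by
  rw [RelEmbedding.wellFounded_iff_isEmpty]
  refine ⟨fun f => ?_⟩
  obtain ⟨i, j, hij, hle⟩ := wellQuasiOrdered_le (fun m => f m)
  have hlt : τ.lt (f j) (f i) := f.map_rel_iff.2 hij
  have hgt : τ.lt (f i) (f j) := by
    have hne : f j - f i ≠ 0 := fun h0 =>
      τ.irrefl _ (le_antisymm (tsub_eq_zero_iff_le.1 h0) hle ▸ hlt)
    simpa [tsub_add_cancel_of_le hle] using τ.add_right 0 _ (f i) (τ.zero_lt _ hne)
  exact τ.lt_asymm hlt hgt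

variable {τ}

theorem leadExp_spec {f : MvPolynomial (Fin n) k} (hf : f ≠ 0) :
    τ.leadExp f ∈ f.support ∧ ∀ β ∈ f.support, β ≠ τ.leadExp f → τ.lt β (τ.leadExp f) := by
  have hex := τ.exists_max (support_nonempty.2 hf)
  rw [leadExp, dif_pos hex]
  exact hex.choose_spec

theorem leadExp_eq {f : MvPolynomial (Fin n) k} {α : Fin n →₀ ℕ}
    (hα : f.coeff α ≠ 0) (hmax : ∀ β ∈ f.support, β ≠ α → τ.lt β α) : τ.leadExp f = α := by
  have hf : f ≠ 0 := by rintro rfl; exact hα (coeff_zero α)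
  obtain ⟨hmem, hmax'⟩ := leadExp_spec (τ := τ) hf
  by_contra hne
  exact τ.lt_asymm (hmax _ hmem hne) (hmax' _ (mem_support_iff.2 hα) (Ne.symm hne))

theorem induction_on_leadExp {P : MvPolynomial (Fin n) k → Prop} (zero : P 0)
    (step : ∀ f ≠ 0, (∀ g, (∀ γ ∈ g.support, τ.lt γ (τ.leadExp f)) → P g) → P f)
    (f : MvPolynomial (Fin n) k) : P f := by
  suffices ∀ σ f, f ≠ 0 → τ.leadExp f = σ → P f by
    by_cases hf : f = 0
    · exact hf ▸ zero
    · exact this _ f hf rfl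
  intro σ
  induction σ using τ.wellFounded.induction with
  | _ σ ih =>
    rintro f hf rfl
    refine step f hf fun g hg => ?_
    by_cases hg0 : g = 0
    · exact hg0 ▸ zero
    · exact ih _ (hg _ (leadExp_spec hg0).1) g hg0 rfl

theorem lt_of_mem_support_sub {f p : MvPolynomial (Fin n) k} {σ : Fin n →₀ ℕ}
    (hf : ∀ γ ∈ f.support, γ ≠ σ → τ.lt γ σ) (hp : ∀ γ ∈ p.support, γ ≠ σ → τ.lt γ σ)
    (hσ : f.coeff σ = p.coeff σ) : ∀ γ ∈ (f - p).support, τ.lt γ σ := by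
  classical
  intro γ hγ
  have hne : γ ≠ σ := by
    rintro rfl
    exact mem_support_iff.1 hγ (by rw [coeff_sub, hσ, sub_self])
  rcases Finset.mem_union.1 (support_sub _ _ _ hγ) with h | h
  · exact hf γ h hne
  · exact hp γ h hne

theorem leadExp_monomial_mul {f : MvPolynomial (Fin n) k} (hf : f ≠ 0) (δ : Fin n →₀ ℕ) :
    τ.leadExp (monomial δ 1 * f) = δ + τ.leadExp f := by
  obtain ⟨hmem, hmax⟩ := leadExp_spec (τ := τ) hf
  refine leadExp_eq (by simpa using mem_support_iff.1 hmem) fun γ hγ hne => ?_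
  obtain ⟨α, hα, rfl⟩ := mem_support_monomial_one_mul.1 hγ
  have hα' : α ≠ τ.leadExp f := by rintro rfl; exact hne rfl
  simpa only [add_comm _ δ] using τ.add_right _ _ δ (hmax α hα hα')

theorem exists_div {L : Set (Fin n →₀ ℕ)} {q : (Fin n →₀ ℕ) → MvPolynomial (Fin n) k}
    (hq : ∀ σ ∈ L, q σ ≠ 0 ∧ τ.leadExp (q σ) = σ) (f : MvPolynomial (Fin n) k) :
    ∃ s ∈ Submodule.span k (q '' L), ∃ r : MvPolynomial (Fin n) k,
      (∀ γ ∈ r.support, γ ∉ L) ∧ f = s + r := by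
  classical
  induction f using τ.induction_on_leadExp with
  | zero => exact ⟨0, zero_mem _, 0, by simp, by simp⟩
  | step f hf ih =>
    obtain ⟨hσ, hmax⟩ := leadExp_spec hf
    set σ := τ.leadExp f
    by_cases hσL : σ ∈ L
    · obtain ⟨hq0, hqσ⟩ := hq σ hσL
      obtain ⟨hqmem, hqmax⟩ := leadExp_spec (τ := τ) hq0
      rw [hqσ] at hqmem hqmax
      set a := f.coeff σ / (q σ).coeff σ
      have hcancel : f.coeff σ = (a • q σ).coeff σ := by
        rw [coeff_smul, smul_eq_mul, div_mul_cancel₀ _ (mem_support_iff.1 hqmem)]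
      obtain ⟨s, hs, r, hr, hfr⟩ := ih _ (lt_of_mem_support_sub hmax
        (fun γ hγ => hqmax γ (support_smul hγ)) hcancel)
      refine ⟨s + a • q σ, add_mem hs (Submodule.smul_mem _ _
        (Submodule.subset_span ⟨σ, hσL, rfl⟩)), r, hr, ?_⟩
      rw [add_right_comm, ← hfr, sub_add_cancel]
    · obtain ⟨s, hs, r, hr, hfr⟩ := ih _ (lt_of_mem_support_sub (p := monomial σ (f.coeff σ))
        hmax (fun γ hγ hne => absurd (Finset.mem_singleton.1 (support_monomial_subset hγ)) hne)
        (by rw [coeff_monomial, if_pos rfl]))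
      refine ⟨s, hs, r + monomial σ (f.coeff σ), fun γ hγ => ?_, ?_⟩
      · rcases Finset.mem_union.1 (support_add hγ) with h | h
        · exact hr γ h
        · rwa [Finset.mem_singleton.1 (support_monomial_subset h)]
      · rw [← add_assoc, ← hfr, sub_add_cancel]

def leadExps (τ : TermOrder n) (J : Ideal (MvPolynomial (Fin n) k)) : Set (Fin n →₀ ℕ) :=
  {α | ∃ f ∈ J, f ≠ 0 ∧ τ.leadExp f = α}

theorem mem_leadExps_of_le {J : Ideal (MvPolynomial (Fin n) k)} {α β : Fin n →₀ ℕ}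
    (hα : α ∈ τ.leadExps J) (hle : α ≤ β) : β ∈ τ.leadExps J := by
  obtain ⟨f, hfJ, hf, rfl⟩ := hα
  obtain ⟨δ, rfl⟩ := exists_add_of_le hle
  refine ⟨monomial δ 1 * f, J.mul_mem_left _ hfJ, mul_ne_zero ?_ hf, ?_⟩
  · exact (monomial_eq_zero (s := δ)).not.2 one_ne_zero
  · rw [leadExp_monomial_mul hf, add_comm]

theorem initialIdeal_eq_span_leadExps (τ : TermOrder n) (J : Ideal (MvPolynomial (Fin n) k)) :
    τ.initialIdeal J = Ideal.span ((fun α => monomial α (1 : k)) '' τ.leadExps J) := by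
  apply le_antisymm <;> rw [initialIdeal, Ideal.span_le]
  · rintro _ ⟨f, hfJ, hf, rfl⟩
    rw [initialTerm, ← mul_one (f.coeff _), ← C_mul_monomial]
    exact Ideal.mul_mem_left _ _ (Ideal.subset_span ⟨_, ⟨f, hfJ, hf, rfl⟩, rfl⟩)
  · rintro _ ⟨_, ⟨f, hfJ, hf, rfl⟩, rfl⟩
    have hc := mem_support_iff.1 (leadExp_spec (τ := τ) hf).1
    have : monomial (τ.leadExp f) 1 = C (f.coeff (τ.leadExp f))⁻¹ * τ.initialTerm f := by
      rw [initialTerm, C_mul_monomial, inv_mul_cancel₀ hc]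
    simp only [SetLike.mem_coe, this]
    exact Ideal.mul_mem_left _ _ (Ideal.subset_span ⟨f, hfJ, hf, rfl⟩)

theorem mem_leadExps_of_mem_support {J : Ideal (MvPolynomial (Fin n) k)}
    {h : MvPolynomial (Fin n) k} (hh : h ∈ τ.initialIdeal J) {γ : Fin n →₀ ℕ}
    (hγ : γ ∈ h.support) : γ ∈ τ.leadExps J := by
  rw [initialIdeal_eq_span_leadExps, mem_ideal_span_monomial_image] at hh
  obtain ⟨α, hα, hle⟩ := hh γ hγ
  exact mem_leadExps_of_le hα hle

end TermOrder

/-- For `L = τ.leadExps I` and `p σ ∈ I`, this is the reduced Gröbner basis of `I`, indexed by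
all the exponents of `in_≺(I)` rather than by its minimal generators. -/
def IsReducedFamily (L : Set (Fin n →₀ ℕ)) (p : (Fin n →₀ ℕ) → MvPolynomial (Fin n) k) : Prop :=
  ∀ σ ∈ L, (p σ).coeff σ = 1 ∧ ∀ γ ∈ (p σ).support, γ ≠ σ → γ ∉ L

namespace IsReducedFamily

variable {L : Set (Fin n →₀ ℕ)} {p : (Fin n →₀ ℕ) → MvPolynomial (Fin n) k}

theorem ne_zero (hp : IsReducedFamily L p) {σ : Fin n →₀ ℕ} (hσ : σ ∈ L) : p σ ≠ 0 := by
  intro h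
  simpa [h] using (hp σ hσ).1

theorem coeff_linearCombination (hp : IsReducedFamily L p) {l : (Fin n →₀ ℕ) →₀ k}
    (hl : l ∈ Finsupp.supported k k L) {σ : Fin n →₀ ℕ} (hσ : σ ∈ L) :
    (Finsupp.linearCombination k p l).coeff σ = l σ := by
  rw [Finsupp.linearCombination_apply, Finsupp.sum, coeff_sum, Finset.sum_eq_single σ]
  · rw [coeff_smul, (hp σ hσ).1, smul_eq_mul, mul_one]
  · intro ρ hρ hne
    rw [coeff_smul, notMem_support_iff.1 fun h => (hp ρ (hl hρ)).2 σ h (Ne.symm hne) hσ,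
      smul_zero]
  · intro h
    rw [Finsupp.notMem_support_iff.1 h, zero_smul, coeff_zero]

theorem leadExp_mem_of_mem_span {τ : TermOrder n} (hp : IsReducedFamily L p)
    (hlead : ∀ σ ∈ L, τ.leadExp (p σ) = σ) {h : MvPolynomial (Fin n) k}
    (hh : h ∈ Submodule.span k (p '' L)) (h0 : h ≠ 0) : τ.leadExp h ∈ L := by
  obtain ⟨l, hl, hlh⟩ := (Finsupp.mem_span_image_iff_linearCombination k).1 hh
  obtain ⟨hβ, hmax⟩ := TermOrder.leadExp_spec (τ := τ) h0
  set β := τ.leadExp h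
  rw [mem_support_iff, ← hlh, Finsupp.linearCombination_apply, Finsupp.sum, coeff_sum] at hβ
  obtain ⟨σ, hσ, hσβ⟩ := Finset.exists_ne_zero_of_sum_ne_zero hβ
  rw [coeff_smul, smul_eq_mul] at hσβ
  have hσL : σ ∈ L := hl hσ
  by_contra hβL
  have hne : β ≠ σ := fun h => hβL (h ▸ hσL)
  have hlt : τ.lt β σ := by
    have := (TermOrder.leadExp_spec (τ := τ) (hp.ne_zero hσL)).2 β
      (mem_support_iff.2 (right_ne_zero_of_mul hσβ))
    rw [hlead σ hσL] at this
    exact this hne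
  have hgt : τ.lt σ β := hmax σ (by
    rw [mem_support_iff, ← hlh, hp.coeff_linearCombination hl hσL]
    exact Finsupp.mem_support_iff.1 hσ) hne.symm
  exact τ.lt_asymm hlt hgt

end IsReducedFamily

namespace TermOrder

variable {τ : TermOrder n} {I : Ideal (MvPolynomial (Fin n) k)}

theorem leadExp_eq_of_isReducedFamily {g : (Fin n →₀ ℕ) → MvPolynomial (Fin n) k}
    (hgI : ∀ σ ∈ τ.leadExps I, g σ ∈ I) (hg : IsReducedFamily (τ.leadExps I) g)
    {σ : Fin n →₀ ℕ} (hσ : σ ∈ τ.leadExps I) : τ.leadExp (g σ) = σ := by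
  have hg0 := hg.ne_zero hσ
  by_contra hne
  exact (hg σ hσ).2 _ (leadExp_spec hg0).1 hne ⟨g σ, hgI σ hσ, hg0, rfl⟩

theorem exists_isReducedFamily (τ : TermOrder n) (I : Ideal (MvPolynomial (Fin n) k)) :
    ∃ g : (Fin n →₀ ℕ) → MvPolynomial (Fin n) k,
      (∀ σ ∈ τ.leadExps I, g σ ∈ I) ∧ IsReducedFamily (τ.leadExps I) g := by
  classical
  choose! q hqI hq0 hq using fun σ (hσ : σ ∈ τ.leadExps I) => hσ
  -- `g σ` is `x^σ` minus its remainder on division by `q`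
  choose g hg r hr hgr using fun σ =>
    τ.exists_div (fun σ hσ => ⟨hq0 σ hσ, hq σ hσ⟩) (monomial σ (1 : k))
  refine ⟨g, fun σ _ => (Submodule.span_le (p := I.restrictScalars k)).2
      (Set.image_subset_iff.2 hqI) (hg σ), fun σ hσ => ⟨?_, fun γ hγ hne => ?_⟩⟩
  · rw [eq_sub_of_add_eq (hgr σ).symm, coeff_sub, coeff_monomial, if_pos rfl,
      notMem_support_iff.1 fun h => hr σ σ h hσ, sub_zero]
  · rw [eq_sub_of_add_eq (hgr σ).symm] at hγ
    rcases Finset.mem_union.1 (support_sub _ _ _ hγ) with h | h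
    · exact absurd (Finset.mem_singleton.1 (support_monomial_subset h)) hne
    · exact hr σ γ h

theorem mem_span_of_isReducedFamily {g : (Fin n →₀ ℕ) → MvPolynomial (Fin n) k}
    (hgI : ∀ σ ∈ τ.leadExps I, g σ ∈ I) (hg : IsReducedFamily (τ.leadExps I) g)
    {f : MvPolynomial (Fin n) k} (hf : f ∈ I) : f ∈ Submodule.span k (g '' τ.leadExps I) := by
  obtain ⟨s, hs, r, hr, rfl⟩ := τ.exists_div
    (fun σ hσ => ⟨hg.ne_zero hσ, leadExp_eq_of_isReducedFamily hgI hg hσ⟩) f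
  obtain rfl : r = 0 := by
    by_contra h0
    have hrI : r ∈ I := by
      have hsI := (Submodule.span_le (p := I.restrictScalars k)).2 (Set.image_subset_iff.2 hgI) hs
      simpa using I.sub_mem hf hsI
    exact hr _ (leadExp_spec h0).1 ⟨r, hrI, h0, rfl⟩
  rwa [add_zero]

end TermOrder

section InitialForm

variable {ω : Fin n → ℝ}

theorem wdeg_add (ω : Fin n → ℝ) (α β : Fin n →₀ ℕ) :
    wdeg ω (α + β) = wdeg ω α + wdeg ω β := by
  simp only [wdeg, Finsupp.add_apply, Nat.cast_add, mul_add, Finset.sum_add_distrib]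

theorem wdeg_eq_weight (ω : Fin n → ℝ) (α : Fin n →₀ ℕ) : wdeg ω α = Finsupp.weight ω α := by
  rw [wdeg, Finsupp.weight_apply, Finsupp.sum_fintype _ _ (by simp)]
  simp [mul_comm]

theorem continuous_wdeg (α : Fin n →₀ ℕ) : Continuous fun ω : Fin n → ℝ => wdeg ω α := by
  unfold wdeg
  fun_prop

theorem coeff_initialForm (ω : Fin n → ℝ) (f : MvPolynomial (Fin n) k) (γ : Fin n →₀ ℕ) :
    (initialForm ω f).coeff γ =
      if ∀ β ∈ f.support, wdeg ω β ≤ wdeg ω γ then f.coeff γ else 0 := by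
  classical
  rw [initialForm, coeff_sum]
  simp only [coeff_monomial, Finset.sum_ite_eq', Finset.mem_filter, mem_support_iff]
  split_ifs <;> simp_all

theorem mem_support_initialForm {f : MvPolynomial (Fin n) k} {γ : Fin n →₀ ℕ} :
    γ ∈ (initialForm ω f).support ↔
      γ ∈ f.support ∧ ∀ β ∈ f.support, wdeg ω β ≤ wdeg ω γ := by
  rw [mem_support_iff, coeff_initialForm]
  split_ifs with h
  · exact ⟨fun h' => ⟨mem_support_iff.2 h', h⟩, fun h' => mem_support_iff.1 h'.1⟩
  · exact ⟨fun h' => absurd rfl h', fun h' => absurd h'.2 h⟩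

@[simp]
theorem initialForm_zero (ω : Fin n → ℝ) : initialForm ω (0 : MvPolynomial (Fin n) k) = 0 := by
  simp [initialForm]

theorem initialForm_ne_zero {f : MvPolynomial (Fin n) k} (hf : f ≠ 0) : initialForm ω f ≠ 0 := by
  obtain ⟨α, hα, hmax⟩ := f.support.exists_max_image (wdeg ω) (support_nonempty.2 hf)
  exact support_nonempty.1 ⟨α, mem_support_initialForm.2 ⟨hα, hmax⟩⟩

theorem initialForm_eq_weightedHomogeneousComponent {f : MvPolynomial (Fin n) k}
    {α : Fin n →₀ ℕ} (hα : α ∈ f.support) (hmax : ∀ β ∈ f.support, wdeg ω β ≤ wdeg ω α) :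
    initialForm ω f = weightedHomogeneousComponent ω (wdeg ω α) f := by
  classical
  ext γ
  rw [coeff_initialForm, coeff_weightedHomogeneousComponent, ← wdeg_eq_weight]
  by_cases hγ : γ ∈ f.support
  · congr 1
    exact propext ⟨fun h => le_antisymm (hmax γ hγ) (h α hα),
      fun h β hβ => h ▸ hmax β hβ⟩
  · simp [notMem_support_iff.1 hγ]

theorem initialForm_monomial_mul (ω : Fin n → ℝ) (δ : Fin n →₀ ℕ) (f : MvPolynomial (Fin n) k) :
    initialForm ω (monomial δ 1 * f) = monomial δ 1 * initialForm ω f := by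
  ext γ
  rw [coeff_initialForm, coeff_monomial_mul', coeff_monomial_mul']
  by_cases hle : δ ≤ γ
  · obtain ⟨α, rfl⟩ := exists_add_of_le hle
    have hmax : (∀ β ∈ (monomial δ 1 * f).support, wdeg ω β ≤ wdeg ω (δ + α)) ↔
        ∀ β ∈ f.support, wdeg ω β ≤ wdeg ω α := by
      simp only [mem_support_monomial_one_mul, forall_exists_index, and_imp,
        forall_apply_eq_imp_iff₂, wdeg_add, add_le_add_iff_left]
    rw [if_pos hle, if_pos hle, add_tsub_cancel_left, coeff_initialForm]
    simp only [hmax, one_mul]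
  · simp only [if_neg hle, ite_self]

end InitialForm

namespace IsReducedFamily

variable {L : Set (Fin n →₀ ℕ)} {p : (Fin n →₀ ℕ) → MvPolynomial (Fin n) k} {ω : Fin n → ℝ}

theorem initialForm (hp : IsReducedFamily L p)
    (hmax : ∀ σ ∈ L, ∀ α ∈ (p σ).support, wdeg ω α ≤ wdeg ω σ) :
    IsReducedFamily L fun σ => initialForm ω (p σ) := fun σ hσ =>
  ⟨by rw [coeff_initialForm, if_pos (hmax σ hσ), (hp σ hσ).1],
    fun γ hγ => (hp σ hσ).2 γ (mem_support_initialForm.1 hγ).1⟩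

/-- `in_ω f` is the top `ω`-graded component of `f`, and the component of `p σ` in a degree
`≥ ⟨ω, σ⟩` is `in_ω (p σ)` or `0`. -/
theorem initialForm_mem_span (hp : IsReducedFamily L p)
    (hmax : ∀ σ ∈ L, ∀ α ∈ (p σ).support, wdeg ω α ≤ wdeg ω σ) {f : MvPolynomial (Fin n) k}
    (hf : f ∈ Submodule.span k (p '' L)) :
    _root_.initialForm ω f ∈ Submodule.span k ((fun σ => _root_.initialForm ω (p σ)) '' L) := by
  obtain ⟨l, hl, hlf⟩ := (Finsupp.mem_span_image_iff_linearCombination k).1 hf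
  rcases eq_or_ne f 0 with rfl | hf0
  · rw [initialForm_zero]
    exact zero_mem _
  obtain ⟨α, hα, hαmax⟩ := f.support.exists_max_image (wdeg ω) (support_nonempty.2 hf0)
  rw [initialForm_eq_weightedHomogeneousComponent hα hαmax, ← hlf,
    Finsupp.linearCombination_apply, Finsupp.sum, map_sum]
  refine Submodule.sum_mem _ fun σ hσ => ?_
  rw [map_smul]
  refine Submodule.smul_mem _ _ ?_
  have hσL : σ ∈ L := hl hσ
  have hσα : wdeg ω σ ≤ wdeg ω α := hαmax σ (by
    rw [mem_support_iff, ← hlf, hp.coeff_linearCombination hl hσL]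
    exact Finsupp.mem_support_iff.1 hσ)
  rcases hσα.eq_or_lt with heq | hlt
  · rw [← heq, ← initialForm_eq_weightedHomogeneousComponent
      (mem_support_iff.2 (by rw [(hp σ hσL).1]; exact one_ne_zero)) (hmax σ hσL)]
    exact Submodule.subset_span ⟨σ, hσL, rfl⟩
  · rw [weightedHomogeneousComponent_eq_zero' _ _ fun β hβ => by
      rw [← wdeg_eq_weight]; exact ((hmax σ hσL β hβ).trans_lt hlt).ne]
    exact zero_mem _

end IsReducedFamily

namespace TermOrder

variable {τ : TermOrder n} {I : Ideal (MvPolynomial (Fin n) k)} {v : Fin n → ℝ}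

theorem initialFormIdeal_le_span {g : (Fin n →₀ ℕ) → MvPolynomial (Fin n) k}
    (hgI : ∀ σ ∈ τ.leadExps I, g σ ∈ I) (hg : IsReducedFamily (τ.leadExps I) g)
    (hmax : ∀ σ ∈ τ.leadExps I, ∀ α ∈ (g σ).support, wdeg v α ≤ wdeg v σ)
    {h : MvPolynomial (Fin n) k} (hh : h ∈ initialFormIdeal v I) :
    h ∈ Submodule.span k ((fun σ => initialForm v (g σ)) '' τ.leadExps I) := by
  have hin {f} (hf : f ∈ I) :
      initialForm v f ∈ Submodule.span k ((fun σ => initialForm v (g σ)) '' τ.leadExps I) :=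
    hg.initialForm_mem_span hmax (mem_span_of_isReducedFamily hgI hg hf)
  refine mem_span_of_mem_ideal_span ?_ (Ideal.span_le.2 ?_ hh)
  · rintro δ _ ⟨σ, hσ, rfl⟩
    rw [← initialForm_monomial_mul]
    exact hin (I.mul_mem_left _ (hgI σ hσ))
  · rintro _ ⟨f, hf, rfl⟩
    exact Submodule.span_le_restrictScalars k _ _ (hin hf)

theorem wdeg_le_of_mem_Cprec (hv : v ∈ Cprec τ I) {p : MvPolynomial (Fin n) k} (hpI : p ∈ I)
    {σ : Fin n →₀ ℕ} (hσ : σ ∈ p.support) (hp : ∀ γ ∈ p.support, γ ≠ σ → γ ∉ τ.leadExps I) :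
    ∀ α ∈ p.support, wdeg v α ≤ wdeg v σ := by
  intro α hα
  refine closure_minimal (fun u (hu : initialFormIdeal u I = τ.initialIdeal I) => ?_)
    (isClosed_le (continuous_wdeg α) (continuous_wdeg σ)) hv
  obtain ⟨γ, hγ⟩ := support_nonempty.2 (initialForm_ne_zero (ω := u) (support_nonempty.1 ⟨σ, hσ⟩))
  have hmem : initialForm u p ∈ τ.initialIdeal I := hu ▸ Ideal.subset_span ⟨p, hpI, rfl⟩
  have hγL : γ ∈ τ.leadExps I := mem_leadExps_of_mem_support hmem hγ
  obtain ⟨hγp, hγmax⟩ := mem_support_initialForm.1 hγ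
  obtain rfl : γ = σ := by_contra fun hne => hp γ hγp hne hγL
  exact hγmax α hα

theorem leadExps_initialFormIdeal (hv : v ∈ Cprec τ I) :
    τ.leadExps (initialFormIdeal v I) = τ.leadExps I := by
  obtain ⟨g, hgI, hg⟩ := τ.exists_isReducedFamily I
  have hmax (σ) (hσ : σ ∈ τ.leadExps I) : ∀ α ∈ (g σ).support, wdeg v α ≤ wdeg v σ :=
    wdeg_le_of_mem_Cprec hv (hgI σ hσ) (mem_support_iff.2 (by rw [(hg σ hσ).1]; exact one_ne_zero))
      (hg σ hσ).2
  have hlead (σ) (hσ : σ ∈ τ.leadExps I) : τ.leadExp (initialForm v (g σ)) = σ := by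
    refine leadExp_eq (by rw [((hg.initialForm hmax) σ hσ).1]; exact one_ne_zero) fun γ hγ hne => ?_
    have := (leadExp_spec (τ := τ) (hg.ne_zero hσ)).2 γ (mem_support_initialForm.1 hγ).1
    rw [leadExp_eq_of_isReducedFamily hgI hg hσ] at this
    exact this hne
  ext α
  constructor
  · rintro ⟨h, hh, h0, rfl⟩
    exact (hg.initialForm hmax).leadExp_mem_of_mem_span hlead
      (initialFormIdeal_le_span hgI hg hmax hh) h0
  · intro hα
    exact ⟨_, Ideal.subset_span ⟨g α, hgI α hα, rfl⟩, (hg.initialForm hmax).ne_zero hα, hlead α hα⟩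

end TermOrder

/-- If `v ∈ C_≺(I)` then `in_≺(in_v(I)) = in_≺(I)`. -/
theorem initialIdeal_initialFormIdeal (τ : TermOrder n)
    (I : Ideal (MvPolynomial (Fin n) k)) (v : Fin n → ℝ) (hv : v ∈ Cprec τ I) :
    τ.initialIdeal (initialFormIdeal v I) = τ.initialIdeal I := by
  rw [τ.initialIdeal_eq_span_leadExps, τ.initialIdeal_eq_span_leadExps,
    τ.leadExps_initialFormIdeal hv]
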